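/- For all 0 ≤ r ≤ m, the Gray image φ(LRM(r,m)) is a binary code of length 2^m, cardinality 2^k with k = Σ_{i=0}^{r} C(m,i), and minimum Hamming distance 2^{m−r}; i.e., it has the parameters of the binary Reed–Muller code RM(r,m). -/

import Mathlib

/-- Lee weight on ℤ₄: w_L(0)=0, w_L(1)=w_L(3)=1, w_L(2)=2. -/
def leeW : ZMod 4 → ℕ := fun a => if a = 0 then 0 else if a = 2 then 2 else 1

/-- Lee weight of a vector: sum of coordinate Lee weights. -/
def leeWt {ι : Type*} [Fintype ι] (x : ι → ZMod 4) : ℕ := ∑ i, leeW (x i)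

/-- β component of the Gray map: β(0)=β(1)=0, β(2)=β(3)=1. -/
def grayβ : ZMod 4 → ZMod 2 := fun a => if a = 0 ∨ a = 1 then 0 else 1

/-- γ component of the Gray map: γ(0)=γ(3)=0, γ(1)=γ(2)=1. -/
def grayγ : ZMod 4 → ZMod 2 := fun a => if a = 0 ∨ a = 3 then 0 else 1

/-- The Gray map φ(x) = (β(x), γ(x)), coded with index set ι ⊕ ι for ℤ₂²ⁿ. -/
def gray {ι : Type*} (x : ι → ZMod 4) : ι ⊕ ι → ZMod 2 :=
  Sum.elim (fun i => grayβ (x i)) (fun i => grayγ (x i))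

/-- `LRM r m` is the quaternary code `𝓛𝓡𝓜(r, m+1)` of the paper, of length `2^m`,
with coordinates indexed by `Fin m → ZMod 2`.  `LRM 0 0 = {0, (2)}`, `LRM (r+1) 0 = ℤ₄`,
and for m ≥ 1 it is given by the Plotkin construction
`{(x, x+y) : x ∈ LRM r m, y ∈ LRM (r-1) m}`, where `LRM (-1) m` is read as the zero
code (giving the repetition-style case `r = 0`). -/
def LRM : ℕ → (m : ℕ) → Set ((Fin m → ZMod 2) → ZMod 4)
  | 0, 0 => {0, fun _ => 2}
  | _ + 1, 0 => Set.univ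
  | 0, m + 1 => {z | ∃ x ∈ LRM 0 m, z = fun v => x (Fin.init v)}
  | r + 1, m + 1 => {z | ∃ x ∈ LRM (r + 1) m, ∃ y ∈ LRM r m,
      z = fun v => if v (Fin.last m) = 0 then x (Fin.init v)
                   else x (Fin.init v) + y (Fin.init v)}

/-!
The Gray map is injective and carries Lee distance on `ℤ₄ⁿ` to Hamming distance, and `LRM r m`
is an additive subgroup, so the minimum distance of the image is the minimum Lee weight of a
nonzero codeword. Both parameters then follow by induction along the Plotkin construction
`(x | x + y)`: it is injective, so the cardinalities multiply and the exponent obeys Pascal's rule;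
and `w(x | x + y) = w(x) + w(x + y)`, which is `2 w(x)` when `y = 0` and at least `w(y)` by the
triangle inequality otherwise, so the minimum weight doubles with `m` and is attained by
`(x | x)` and `(0 | y)`.
-/

lemma leeW_eq_zero_iff : ∀ a : ZMod 4, leeW a = 0 ↔ a = 0 := by decide

lemma leeW_add_le : ∀ a b : ZMod 4, leeW (a + b) ≤ leeW a + leeW b := by decide

lemma leeW_neg : ∀ a : ZMod 4, leeW (-a) = leeW a := by decide

lemma leeW_sub_eq_grayβ_add_grayγ : ∀ a b : ZMod 4,
    leeW (a - b) = (if grayβ a ≠ grayβ b then 1 else 0) + (if grayγ a ≠ grayγ b then 1 else 0) := by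
  decide

lemma eq_of_grayβ_eq_of_grayγ_eq :
    ∀ a b : ZMod 4, grayβ a = grayβ b → grayγ a = grayγ b → a = b := by
  decide

lemma gray_injective {ι : Type*} : Function.Injective (gray (ι := ι)) := fun _ _ h =>
  funext fun i => eq_of_grayβ_eq_of_grayγ_eq _ _ (congrFun h (.inl i)) (congrFun h (.inr i))

section LeeWeight

variable {ι : Type*} [Fintype ι]

lemma leeWt_eq_zero_iff {x : ι → ZMod 4} : leeWt x = 0 ↔ x = 0 := by
  simp only [leeWt, Finset.sum_eq_zero_iff, Finset.mem_univ, true_implies, leeW_eq_zero_iff,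
    funext_iff, Pi.zero_apply]

lemma leeWt_zero : leeWt (0 : ι → ZMod 4) = 0 := leeWt_eq_zero_iff.2 rfl

lemma leeWt_add_le (x y : ι → ZMod 4) : leeWt (x + y) ≤ leeWt x + leeWt y := by
  rw [leeWt, leeWt, leeWt, ← Finset.sum_add_distrib]
  exact Finset.sum_le_sum fun i _ => leeW_add_le (x i) (y i)

lemma leeWt_neg (x : ι → ZMod 4) : leeWt (-x) = leeWt x := by
  simp only [leeWt, Pi.neg_apply, leeW_neg]

lemma hammingDist_gray (x y : ι → ZMod 4) : hammingDist (gray x) (gray y) = leeWt (x - y) := by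
  rw [hammingDist, Finset.card_filter, Fintype.sum_sum_type, ← Finset.sum_add_distrib, leeWt]
  exact Finset.sum_congr rfl fun i _ => (leeW_sub_eq_grayβ_add_grayγ (x i) (y i)).symm

end LeeWeight

def plotkin {m : ℕ} {G : Type*} [Add G] (x y : (Fin m → ZMod 2) → G) :
    (Fin (m + 1) → ZMod 2) → G :=
  fun v => if v (Fin.last m) = 0 then x (Fin.init v) else x (Fin.init v) + y (Fin.init v)

section Plotkin

variable {m : ℕ} {G : Type*}

@[simp]
lemma plotkin_snoc_zero [Add G] (x y : (Fin m → ZMod 2) → G) (u : Fin m → ZMod 2) :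
    plotkin x y (Fin.snoc u 0) = x u := by
  simp [plotkin]

@[simp]
lemma plotkin_snoc_one [Add G] (x y : (Fin m → ZMod 2) → G) (u : Fin m → ZMod 2) :
    plotkin x y (Fin.snoc u 1) = x u + y u := by
  simp [plotkin]

lemma plotkin_zero_right [AddZeroClass G] (x : (Fin m → ZMod 2) → G) :
    plotkin x 0 = fun v => x (Fin.init v) := by
  funext v
  simp [plotkin]

lemma plotkin_zero_zero [AddZeroClass G] : plotkin (0 : (Fin m → ZMod 2) → G) 0 = 0 := by
  funext v
  simp [plotkin]

lemma plotkin_sub_plotkin [AddCommGroup G] (x y x' y' : (Fin m → ZMod 2) → G) :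
    plotkin x y - plotkin x' y' = plotkin (x - x') (y - y') := by
  funext v
  simp only [plotkin, Pi.sub_apply]
  split_ifs <;> abel

lemma plotkin_inj [Add G] [IsLeftCancelAdd G] {x y x' y' : (Fin m → ZMod 2) → G} :
    plotkin x y = plotkin x' y' ↔ x = x' ∧ y = y' := by
  refine ⟨fun h => ?_, fun ⟨hx, hy⟩ => hx ▸ hy ▸ rfl⟩
  have hx : x = x' := funext fun u => by simpa using congrFun h (Fin.snoc u 0)
  subst hx
  exact ⟨rfl, funext fun u => by simpa using congrFun h (Fin.snoc u 1)⟩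

lemma sum_eq_sum_snoc_zero_add_sum_snoc_one {M : Type*} [AddCommMonoid M]
    (f : (Fin (m + 1) → ZMod 2) → M) :
    ∑ v, f v = ∑ u, f (Fin.snoc u 0) + ∑ u, f (Fin.snoc u 1) := by
  rw [← (Fin.snocEquiv fun _ => ZMod 2).sum_comp, Fintype.sum_prod_type]
  exact Fin.sum_univ_two _

lemma leeWt_plotkin (x y : (Fin m → ZMod 2) → ZMod 4) :
    leeWt (plotkin x y) = leeWt x + leeWt (x + y) := by
  simp only [leeWt, sum_eq_sum_snoc_zero_add_sum_snoc_one (fun v => leeW (plotkin x y v)),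
    plotkin_snoc_zero, plotkin_snoc_one, Pi.add_apply]

lemma plotkin_uncurry_injective [Add G] [IsLeftCancelAdd G] :
    Function.Injective (Function.uncurry (plotkin (m := m) (G := G))) :=
  fun _ _ h => Prod.ext_iff.2 (plotkin_inj.1 h)

lemma plotkin_eq_zero_iff [AddZeroClass G] [IsLeftCancelAdd G]
    {x y : (Fin m → ZMod 2) → G} : plotkin x y = 0 ↔ x = 0 ∧ y = 0 := by
  rw [← plotkin_zero_zero, plotkin_inj]

lemma leeWt_plotkin_zero_right (x : (Fin m → ZMod 2) → ZMod 4) :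
    leeWt (plotkin x 0) = 2 * leeWt x := by
  rw [leeWt_plotkin, add_zero, two_mul]

lemma leeWt_le_leeWt_plotkin (x y : (Fin m → ZMod 2) → ZMod 4) :
    leeWt y ≤ leeWt (plotkin x y) :=
  calc leeWt y = leeWt (x + y + -x) := by rw [add_neg_cancel_comm]
    _ ≤ leeWt (x + y) + leeWt (-x) := leeWt_add_le _ _
    _ = leeWt (plotkin x y) := by rw [leeWt_neg, leeWt_plotkin, add_comm]

end Plotkin

lemma sum_range_choose_of_le {n r : ℕ} (h : n ≤ r) :
    ∑ i ∈ Finset.range (r + 1), n.choose i = 2 ^ n := by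
  rw [← Nat.sum_range_choose n]
  refine (Finset.sum_subset (Finset.range_subset_range.2 (by omega)) fun i hi hni => ?_).symm
  simp only [Finset.mem_range, not_lt] at hi hni
  exact Nat.choose_eq_zero_of_lt hni

lemma sum_range_choose_succ_succ (n r : ℕ) :
    ∑ i ∈ Finset.range (r + 1 + 1), (n + 1).choose i
      = ∑ i ∈ Finset.range (r + 1 + 1), n.choose i + ∑ i ∈ Finset.range (r + 1), n.choose i := by
  rw [Finset.sum_range_succ' (fun i => (n + 1).choose i),
    Finset.sum_range_succ' (fun i => n.choose i) (r + 1)]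
  simp only [Nat.choose_succ_succ', Finset.sum_add_distrib, Nat.choose_zero_right]
  omega

section LRM

variable {r m : ℕ}

lemma LRM_zero_succ : LRM 0 (m + 1) = (plotkin · 0) '' LRM 0 m := by
  ext z
  simp only [LRM, plotkin_zero_right, Set.mem_ofPred_eq, Set.mem_image, eq_comm]

lemma LRM_succ_succ : LRM (r + 1) (m + 1) = Set.image2 plotkin (LRM (r + 1) m) (LRM r m) := by
  ext z
  simp only [LRM, Set.mem_ofPred_eq, Set.mem_image2, eq_comm]
  rfl

lemma zero_mem_LRM (r m : ℕ) : (0 : (Fin m → ZMod 2) → ZMod 4) ∈ LRM r m := by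
  induction m generalizing r with
  | zero => cases r <;> simp [LRM]
  | succ m ih =>
    cases r with
    | zero => exact LRM_zero_succ ▸ ⟨0, ih 0, plotkin_zero_zero⟩
    | succ r => exact LRM_succ_succ ▸ ⟨0, ih _, 0, ih _, plotkin_zero_zero⟩

lemma sub_mem_LRM {a b : (Fin m → ZMod 2) → ZMod 4} (ha : a ∈ LRM r m) (hb : b ∈ LRM r m) :
    a - b ∈ LRM r m := by
  induction m generalizing r with
  | zero =>
    cases r with
    | zero =>
      obtain rfl | rfl := ha <;> obtain rfl | rfl := hb <;>
        simp [LRM, funext_iff, show (-2 : ZMod 4) = 2 by decide]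
    | succ r => trivial
  | succ m ih =>
    cases r with
    | zero =>
      rw [LRM_zero_succ] at ha hb ⊢
      obtain ⟨x, hx, rfl⟩ := ha
      obtain ⟨x', hx', rfl⟩ := hb
      exact ⟨x - x', ih hx hx', by rw [plotkin_sub_plotkin, sub_zero]⟩
    | succ r =>
      rw [LRM_succ_succ] at ha hb ⊢
      obtain ⟨x, hx, y, hy, rfl⟩ := ha
      obtain ⟨x', hx', y', hy', rfl⟩ := hb
      exact ⟨_, ih hx hx', _, ih hy hy', (plotkin_sub_plotkin ..).symm⟩

lemma ncard_LRM (r m : ℕ) :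
    (LRM r m).ncard = 2 ^ ∑ i ∈ Finset.range (r + 1), (m + 1).choose i := by
  induction m generalizing r with
  | zero =>
    cases r with
    | zero =>
      have h02 : (0 : (Fin 0 → ZMod 2) → ZMod 4) ≠ fun _ => 2 :=
        fun h => absurd (congrFun h Fin.elim0) (by decide)
      simp [LRM, Set.ncard_pair h02]
    | succ r =>
      simp [LRM, sum_range_choose_of_le (Nat.le_add_left 1 r)]
  | succ m ih =>
    cases r with
    | zero =>
      rw [LRM_zero_succ, Set.ncard_image_of_injective _ fun _ _ h => (plotkin_inj.1 h).1, ih]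
      simp
    | succ r =>
      rw [LRM_succ_succ, ← Set.image_uncurry_prod,
        Set.ncard_image_of_injective _ plotkin_uncurry_injective, Set.ncard_prod, ih, ih, ← pow_add,
        sum_range_choose_succ_succ (m + 1) r]

lemma two_pow_le_leeWt_of_mem_LRM {z : (Fin m → ZMod 2) → ZMod 4} (hz : z ∈ LRM r m)
    (hz0 : z ≠ 0) : 2 ^ (m + 1 - r) ≤ leeWt z := by
  induction m generalizing r with
  | zero =>
    cases r with
    | zero =>
      obtain rfl | rfl := hz
      · exact absurd rfl hz0
      · decide
    | succ r =>
      rw [Nat.sub_eq_zero_of_le (by omega), pow_zero, Nat.one_le_iff_ne_zero]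
      exact leeWt_eq_zero_iff.not.2 hz0
  | succ m ih =>
    cases r with
    | zero =>
      rw [LRM_zero_succ] at hz
      obtain ⟨x, hx, rfl⟩ := hz
      have hx0 : x ≠ 0 := fun h => hz0 (plotkin_eq_zero_iff.2 ⟨h, rfl⟩)
      rw [leeWt_plotkin_zero_right, Nat.sub_zero, pow_succ']
      exact Nat.mul_le_mul_left 2 (ih hx hx0)
    | succ r =>
      rw [LRM_succ_succ] at hz
      obtain ⟨x, hx, y, hy, rfl⟩ := hz
      by_cases hy0 : y = 0
      · subst hy0
        have hx0 : x ≠ 0 := fun h => hz0 (plotkin_eq_zero_iff.2 ⟨h, rfl⟩)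
        calc 2 ^ (m + 1 + 1 - (r + 1)) ≤ 2 ^ (m + 1 - (r + 1) + 1) :=
              Nat.pow_le_pow_right two_pos (by omega)
          _ = 2 * 2 ^ (m + 1 - (r + 1)) := pow_succ' _ _
          _ ≤ leeWt (plotkin x 0) := by
              rw [leeWt_plotkin_zero_right]
              exact Nat.mul_le_mul_left 2 (ih hx hx0)
      · calc 2 ^ (m + 1 + 1 - (r + 1)) = 2 ^ (m + 1 - r) := by rw [Nat.add_sub_add_right]
          _ ≤ leeWt y := ih hy hy0
          _ ≤ leeWt (plotkin x y) := leeWt_le_leeWt_plotkin x y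

lemma exists_mem_LRM_leeWt_eq (hr : r ≤ m + 1) :
    ∃ z ∈ LRM r m, leeWt z = 2 ^ (m + 1 - r) := by
  induction m generalizing r with
  | zero =>
    interval_cases r
    · exact ⟨fun _ => 2, Or.inr rfl, by decide⟩
    · exact ⟨fun _ => 1, trivial, by decide⟩
  | succ m ih =>
    cases r with
    | zero =>
      obtain ⟨x, hx, hwx⟩ := ih (Nat.zero_le _)
      refine ⟨plotkin x 0, LRM_zero_succ ▸ ⟨x, hx, rfl⟩, ?_⟩
      rw [leeWt_plotkin_zero_right, hwx, Nat.sub_zero, Nat.sub_zero, ← pow_succ']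
    | succ r =>
      obtain ⟨y, hy, hwy⟩ := ih (Nat.le_of_succ_le_succ hr)
      refine ⟨plotkin 0 y, LRM_succ_succ ▸ ⟨0, zero_mem_LRM _ _, y, hy, rfl⟩, ?_⟩
      rw [leeWt_plotkin, leeWt_zero, zero_add, zero_add, hwy, Nat.add_sub_add_right]

end LRM

/-- The Gray image of `LRM(r,m)` (paper's `m` is `m+1`) is a binary code of length
`2^m`, cardinality `2^k` with `k = ∑_{i=0}^r C(m,i)`, and minimum Hamming distance
`2^{m-r}`: it has the parameters of the Reed–Muller code RM(r,m). -/
theorem gray_LRM_params (m r : ℕ) (hr : r ≤ m + 1) :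
    (gray '' LRM r m).ncard = 2 ^ (∑ i ∈ Finset.range (r + 1), (m + 1).choose i) ∧
    IsLeast {e | ∃ u ∈ gray '' LRM r m, ∃ v ∈ gray '' LRM r m, u ≠ v ∧
      e = hammingDist u v} (2 ^ (m + 1 - r)) := by
  refine ⟨by rw [Set.ncard_image_of_injective _ gray_injective, ncard_LRM], ?_, ?_⟩
  · obtain ⟨c, hc, hwc⟩ := exists_mem_LRM_leeWt_eq hr
    have hc0 : c ≠ 0 := by
      rintro rfl
      exact pow_ne_zero _ two_ne_zero (hwc.symm.trans leeWt_zero)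
    refine ⟨gray c, ⟨c, hc, rfl⟩, gray 0, ⟨0, zero_mem_LRM r m, rfl⟩,
      gray_injective.ne hc0, ?_⟩
    rw [hammingDist_gray, sub_zero, hwc]
  · rintro e ⟨_, ⟨a, ha, rfl⟩, _, ⟨b, hb, rfl⟩, hab, rfl⟩
    rw [hammingDist_gray]
    exact two_pow_le_leeWt_of_mem_LRM (sub_mem_LRM ha hb) (sub_ne_zero.2 fun h => hab (h ▸ rfl))
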